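/- Let 0 < m ≤ M, Δ > 0, and π ≥ 1. Let g_1,…,g_T be revenue functions of the form g_t(v) = (p_t − f_t(v))·v with base prices p_t ∈ [m,M] and with each f_t : ℝ → ℝ convex on [0,Δ], f_t(0) = 0, and f_t ≥ 0 on [0,Δ]. Let v̄_1,…,v̄_T be a CR-Pursuit(π) trajectory for this input with v̄_t ∈ [0, v̂_t] for every t, where v̂_t ∈ [0,Δ] is a maximizer of g_t over [0,Δ]. Then ∑_{t=1}^T v̄_t ≤ [2Δ/(π·(1 + √(1 − 1/π)))]·(ln(M/m) + 1); that is, the worst-case inventory Φ_Δ(π) of CR-Pursuit(π) for one-way trading with price elasticity is at most 2Δ(ln θ + 1)/(π(1+√(1−1/π))). -/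

import Mathlib

/-!
At each step CR-Pursuit sells `v̄_t ≤ 2 (η_{t+1} - η_t) / (π (1 + √(1 - 1/π)) p_t)`. Indeed, with
`φ = f_t(v̂_t)` and `x = v̄_t / v̂_t`, maximality of `v̂_t` gives `2 φ ≤ p_t`, and the pursuit
equation `π g_t(v̄_t) = η_{t+1} - η_t ≤ g_t(v̂_t)` together with `f_t(v̄_t) ≤ x φ` gives `π x ≤ 1`
and `φ (1 - π x²) ≤ p_t (1 - π x)`; these force `2 f_t(v̄_t) ≤ 2 x φ ≤ (1 - √(1 - 1/π)) p_t`.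

It remains to bound `∑_t (η_{t+1} - η_t) / p_t` by `Δ (ln θ + 1)`. Let `F_t(δ)` be the offline
optimum of the first `t` functions with inventory `δ`, concave in `δ`, and consider the potential
`Φ(F) = F(Δ)/m - ∫_m^M F*(y) / y² dy` with `F*(y) = sup_{0 ≤ δ ≤ Δ} (F(δ) - y δ)`. Adding `g_t`
leaves `F*` unchanged above `p_t` and raises it by at most `η_{t+1} - η_t` below `p_t`, so `Φ`
grows by at least `(η_{t+1} - η_t) / p_t`. Finally `Φ(F_0) = 0` and
`Φ(F_T) ≤ F_T(Δ)/M + Δ ln θ ≤ Δ (ln θ + 1)`.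
-/

/-- An admissible revenue function on `[0, Δ]` with base price in `[m, M]`. -/
def Admissible (Δ m M : ℝ) (g : ℝ → ℝ) : Prop :=
  ConcaveOn ℝ (Set.Icc 0 Δ) g ∧ MonotoneOn g (Set.Icc 0 Δ) ∧
  (∀ x ∈ Set.Icc (0:ℝ) Δ, DifferentiableAt ℝ g x) ∧
  g 0 = 0 ∧ deriv g 0 ∈ Set.Icc m M

/-- Offline optimum for the first `n` revenue functions with inventory `Δ`. -/
noncomputable def eta (Δ : ℝ) (g : ℕ → ℝ → ℝ) (n : ℕ) : ℝ :=
  sSup { r : ℝ | ∃ v : ℕ → ℝ, (∀ t < n, 0 ≤ v t) ∧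
    (∑ t ∈ Finset.range n, v t) ≤ Δ ∧ r = ∑ t ∈ Finset.range n, g t (v t) }

/-- A CR-Pursuit(π) trajectory for the first T revenue functions. -/
def CRTraj (Δ : ℝ) (g : ℕ → ℝ → ℝ) (T : ℕ) (pi : ℝ) (v : ℕ → ℝ) : Prop :=
  ∀ t < T, v t ∈ Set.Icc 0 Δ ∧ pi * g t (v t) = eta Δ g (t+1) - eta Δ g t

open Set

section Revenue

variable {Δ : ℝ} {f : ℝ → ℝ}

lemma ConvexOn.map_mul_le_of_map_zero {s : Set ℝ} (hf : ConvexOn ℝ s f) (h0 : 0 ∈ s)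
    (hf0 : f 0 = 0) {v a : ℝ} (hv : v ∈ s) (ha₀ : 0 ≤ a) (ha₁ : a ≤ 1) : f (a * v) ≤ a * f v := by
  simpa [hf0] using hf.2 hv h0 ha₀ (sub_nonneg.2 ha₁) (by ring)

lemma ConvexOn.monotoneOn_of_map_zero (hf : ConvexOn ℝ (Icc 0 Δ) f) (hf0 : f 0 = 0)
    (hf_nonneg : ∀ v ∈ Icc 0 Δ, 0 ≤ f v) : MonotoneOn f (Icc 0 Δ) := by
  intro a ha b hb hab
  rcases hb.1.eq_or_lt with rfl | hb0
  · rw [le_antisymm hab ha.1]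
  have h := hf.map_mul_le_of_map_zero ⟨le_rfl, hb.1.trans hb.2⟩ hf0 hb (div_nonneg ha.1 hb0.le)
    ((div_le_one hb0).2 hab)
  rw [div_mul_cancel₀ _ hb0.ne'] at h
  nlinarith [hf_nonneg b hb, (div_le_one hb0).2 hab]

lemma concaveOn_sub_mul_self (hf : ConvexOn ℝ (Icc 0 Δ) f) (hf0 : f 0 = 0)
    (hf_nonneg : ∀ v ∈ Icc 0 Δ, 0 ≤ f v) (p : ℝ) :
    ConcaveOn ℝ (Icc 0 Δ) (fun v => (p - f v) * v) := by
  have hlin : ConcaveOn ℝ (Icc 0 Δ) (fun v => p * v) :=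
    (LinearMap.mul ℝ ℝ p).concaveOn (convex_Icc 0 Δ)
  have hmul : ConvexOn ℝ (Icc 0 Δ) (f * id) :=
    hf.mul (convexOn_id (convex_Icc 0 Δ)) hf_nonneg (fun _ hv => hv.1)
      ((hf.monotoneOn_of_map_zero hf0 hf_nonneg).monovaryOn monotoneOn_id)
  have h : (fun v => (p - f v) * v) = (fun v => p * v) - f * id := by
    ext v
    simp only [Pi.sub_apply, Pi.mul_apply, id]
    ring
  exact h ▸ hlin.sub hmul

lemma two_mul_le_of_isMaxOn (hf : ConvexOn ℝ (Icc 0 Δ) f) (hf0 : f 0 = 0) {p vh : ℝ} (hp : 0 ≤ p)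
    (hvh : vh ∈ Icc 0 Δ) (hvh0 : 0 < vh)
    (hmax : IsMaxOn (fun v => (p - f v) * v) (Icc 0 Δ) vh) : 2 * f vh ≤ p := by
  by_contra! hlt
  have hφ : 0 < f vh := by linarith
  set a := p / (2 * f vh)
  have ha₀ : 0 ≤ a := by positivity
  have ha₁ : a < 1 := by rw [div_lt_one (by positivity)]; linarith
  have hmem : a * vh ∈ Icc 0 Δ :=
    ⟨mul_nonneg ha₀ hvh.1, (mul_le_of_le_one_left hvh.1 ha₁.le).trans hvh.2⟩
  have hscale := hf.map_mul_le_of_map_zero ⟨le_rfl, hvh.1.trans hvh.2⟩ hf0 hvh ha₀ ha₁.le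
  have hle : (p - f (a * vh)) * (a * vh) ≤ (p - f vh) * vh := hmax hmem
  have hpa : p = 2 * f vh * a := by simp only [a]; field_simp
  -- maximality and convexity give `(p - a φ) a ≤ p - φ`, i.e. `0 ≤ (1 - a)(p - (1 + a) φ)`,
  -- but `p - (1 + a) φ = p/2 - φ < 0`
  nlinarith [mul_le_mul_of_nonneg_right hscale (mul_nonneg ha₀ hvh.1),
    mul_pos (mul_pos (sub_pos.2 ha₁) (sub_pos.2 hlt)) hvh0]

end Revenue

/-- With `s = √(1 - 1/π)` one has `π (1 - s²) = 1`, whence the identity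
`(1 - s)(v̂² - π w²) - 2 w (v̂ - π w) = π (1 + s) (w - (1 - s) v̂)²`. -/
lemma two_mul_mul_le_one_sub_sqrt_mul {π p φ w vh : ℝ} (hπ : 1 ≤ π) (hw : 0 ≤ w)
    (hwvh : w ≤ vh) (hπw : π * w ≤ vh) (hp : 0 ≤ p) (hφ : 2 * φ ≤ p)
    (h : φ * (vh ^ 2 - π * w ^ 2) ≤ p * vh * (vh - π * w)) :
    2 * w * φ ≤ (1 - √(1 - 1 / π)) * p * vh := by
  set s := √(1 - 1 / π)
  have hs : π * (1 - s ^ 2) = 1 := by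
    rw [Real.sq_sqrt (sub_nonneg.2 (div_le_one_of_le₀ hπ (by linarith)))]
    field_simp
    ring
  have hvh : 0 ≤ vh := hw.trans hwvh
  rcases le_or_gt (vh ^ 2 - π * w ^ 2) 0 with hdeg | hpos
  · rcases hw.eq_or_lt with rfl | hw0
    · have : vh = 0 := by nlinarith
      simp [this]
    have hπ1 : π = 1 := by
      nlinarith [mul_self_le_mul_self (by positivity : 0 ≤ π * w) hπw, mul_pos hw0 hw0]
    have hwvh' : w = vh := by subst hπ1; nlinarith
    have hs0 : s = 0 := by simp [s, hπ1]
    subst hwvh'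
    rw [hs0]
    nlinarith
  · have hid : 2 * w * (vh - π * w) ≤ (1 - s) * (vh ^ 2 - π * w ^ 2) := by
      have hsq : 0 ≤ π * (1 + s) * (w - (1 - s) * vh) ^ 2 := by
        have : 0 ≤ s := Real.sqrt_nonneg _
        positivity
      linear_combination hsq + ((1 - s) * vh ^ 2 - 2 * w * vh) * hs
    refine le_of_mul_le_mul_right ?_ hpos
    calc 2 * w * φ * (vh ^ 2 - π * w ^ 2) ≤ 2 * w * (p * vh * (vh - π * w)) := by
          rw [mul_assoc]; exact mul_le_mul_of_nonneg_left h (by positivity)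
      _ = p * vh * (2 * w * (vh - π * w)) := by ring
      _ ≤ p * vh * ((1 - s) * (vh ^ 2 - π * w ^ 2)) :=
          mul_le_mul_of_nonneg_left hid (mul_nonneg hp hvh)
      _ = (1 - s) * p * vh * (vh ^ 2 - π * w ^ 2) := by ring

lemma one_add_sqrt_mul_le_two_mul_revenue {Δ p π w vh : ℝ} {f : ℝ → ℝ}
    (hf : ConvexOn ℝ (Icc 0 Δ) f) (hf0 : f 0 = 0) (hf_nonneg : ∀ v ∈ Icc 0 Δ, 0 ≤ f v)
    (hp : 0 < p) (hπ : 1 ≤ π) (hvh : vh ∈ Icc 0 Δ)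
    (hmax : IsMaxOn (fun v => (p - f v) * v) (Icc 0 Δ) vh) (hw : w ∈ Icc 0 vh)
    (hrev : π * ((p - f w) * w) ≤ (p - f vh) * vh) :
    (1 + √(1 - 1 / π)) * p * w ≤ 2 * ((p - f w) * w) := by
  rcases hw.1.eq_or_lt with rfl | hw0
  · simp
  have hvh0 : 0 < vh := hw0.trans_le hw.2
  have hφ := two_mul_le_of_isMaxOn hf hf0 hp.le hvh hvh0 hmax
  have hfw : f w * vh ≤ w * f vh := by
    have h := hf.map_mul_le_of_map_zero ⟨le_rfl, hvh.1.trans hvh.2⟩ hf0 hvh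
      (div_nonneg hw.1 hvh0.le) ((div_le_one hvh0).2 hw.2)
    rw [div_mul_cancel₀ _ hvh0.ne', div_mul_eq_mul_div, le_div_iff₀ hvh0] at h
    exact h
  have hfw_le : f w ≤ f vh :=
    hf.monotoneOn_of_map_zero hf0 hf_nonneg ⟨hw.1, hw.2.trans hvh.2⟩ hvh hw.2
  have hπw : π * w ≤ vh := by
    have hgap : 0 < p - f vh := by linarith [hf_nonneg vh hvh]
    refine le_of_mul_le_mul_right ?_ hgap
    nlinarith [mul_le_mul_of_nonneg_left hfw_le (by positivity : 0 ≤ π * w)]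
  have hC : f vh * (vh ^ 2 - π * w ^ 2) ≤ p * vh * (vh - π * w) := by
    nlinarith [mul_le_mul_of_nonneg_left hfw (by positivity : 0 ≤ π * w),
      mul_le_mul_of_nonneg_right hrev hvh0.le]
  have key := two_mul_mul_le_one_sub_sqrt_mul hπ hw.1 hw.2 hπw hp.le hφ hC
  have hfw2 : 2 * f w ≤ (1 - √(1 - 1 / π)) * p := by
    refine le_of_mul_le_mul_right ?_ hvh0
    nlinarith
  nlinarith

lemma ConcaveOn.map_add_sub_map_le {s : Set ℝ} {F : ℝ → ℝ} (hF : ConcaveOn ℝ s F) {x y u : ℝ}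
    (hx : x ∈ s) (hyu : y + u ∈ s) (hxy : x ≤ y) (hu : 0 ≤ u) :
    F (y + u) - F y ≤ F (x + u) - F x := by
  rcases (hxy.trans (le_add_of_nonneg_right hu)).eq_or_lt with h | h
  · obtain rfl : u = 0 := by linarith
    simp
  set a := u / (y + u - x)
  have ha₀ : 0 ≤ a := div_nonneg hu (by linarith)
  have ha₁ : a ≤ 1 := (div_le_one (by linarith)).2 (by linarith)
  have h₁ := hF.2 hx hyu (sub_nonneg.2 ha₁) ha₀ (by ring)
  have h₂ := hF.2 hx hyu ha₀ (sub_nonneg.2 ha₁) (by ring)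
  have e₁ : (1 - a) • x + a • (y + u) = x + u := by
    simp only [smul_eq_mul, a]; field_simp; ring
  have e₂ : a • x + (1 - a) • (y + u) = y := by
    simp only [smul_eq_mul, a]; field_simp; ring
  rw [e₁] at h₁
  rw [e₂] at h₂
  simp only [smul_eq_mul] at h₁ h₂
  linarith

def feasibleRevenue (g : ℕ → ℝ → ℝ) (n : ℕ) (δ : ℝ) : Set ℝ :=
  {r | ∃ v : ℕ → ℝ, (∀ t < n, 0 ≤ v t) ∧ (∑ t ∈ Finset.range n, v t) ≤ δ ∧
    r = ∑ t ∈ Finset.range n, g t (v t)}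

section OfflineOptimum

open Finset

variable {Δ M δ : ℝ} {g : ℕ → ℝ → ℝ} {n : ℕ}

lemma eta_eq_sSup_feasibleRevenue : eta δ g n = sSup (feasibleRevenue g n δ) := rfl

lemma mem_Icc_of_sum_le {v : ℕ → ℝ} (hv0 : ∀ t < n, 0 ≤ v t) (hvδ : ∑ t ∈ range n, v t ≤ δ)
    {t : ℕ} (ht : t < n) : v t ∈ Icc 0 δ :=
  ⟨hv0 t ht, (single_le_sum (fun s hs => hv0 s (mem_range.1 hs)) (mem_range.2 ht)).trans hvδ⟩

lemma sum_le_mul_sum (hgM : ∀ t < n, ∀ x ∈ Icc 0 Δ, g t x ≤ M * x) (hδΔ : δ ≤ Δ)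
    {v : ℕ → ℝ} (hv0 : ∀ t < n, 0 ≤ v t) (hvδ : ∑ t ∈ range n, v t ≤ δ) :
    ∑ t ∈ range n, g t (v t) ≤ M * ∑ t ∈ range n, v t := by
  rw [mul_sum]
  refine sum_le_sum fun t ht => hgM t (mem_range.1 ht) _ ?_
  exact Icc_subset_Icc_right hδΔ (mem_Icc_of_sum_le hv0 hvδ (mem_range.1 ht))

lemma feasibleRevenue_nonempty (hδ : 0 ≤ δ) : (feasibleRevenue g n δ).Nonempty :=
  ⟨_, fun _ => 0, fun _ _ => le_rfl, by simpa using hδ, rfl⟩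

lemma bddAbove_feasibleRevenue (hgM : ∀ t < n, ∀ x ∈ Icc 0 Δ, g t x ≤ M * x) (hδΔ : δ ≤ Δ) :
    BddAbove (feasibleRevenue g n δ) := by
  refine ⟨|M| * Δ, ?_⟩
  rintro _ ⟨v, hv0, hvδ, rfl⟩
  have hsum : 0 ≤ ∑ t ∈ range n, v t := sum_nonneg fun t ht => hv0 t (mem_range.1 ht)
  exact (sum_le_mul_sum hgM hδΔ hv0 hvδ).trans
    (mul_le_mul (le_abs_self M) (hvδ.trans hδΔ) hsum (abs_nonneg M))

lemma le_eta (hgM : ∀ t < n, ∀ x ∈ Icc 0 Δ, g t x ≤ M * x) (hδΔ : δ ≤ Δ) {v : ℕ → ℝ}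
    (hv0 : ∀ t < n, 0 ≤ v t) (hvδ : ∑ t ∈ range n, v t ≤ δ) :
    ∑ t ∈ range n, g t (v t) ≤ eta δ g n :=
  le_csSup (bddAbove_feasibleRevenue hgM hδΔ) ⟨v, hv0, hvδ, rfl⟩

lemma eta_le_of_forall (hδ : 0 ≤ δ) {C : ℝ}
    (h : ∀ v : ℕ → ℝ, (∀ t < n, 0 ≤ v t) → ∑ t ∈ range n, v t ≤ δ →
      ∑ t ∈ range n, g t (v t) ≤ C) :
    eta δ g n ≤ C :=
  csSup_le (feasibleRevenue_nonempty hδ) <| by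
    rintro _ ⟨v, hv0, hvδ, rfl⟩
    exact h v hv0 hvδ

lemma eta_le_mul (hM : 0 ≤ M) (hgM : ∀ t < n, ∀ x ∈ Icc 0 Δ, g t x ≤ M * x) (hδ : 0 ≤ δ)
    (hδΔ : δ ≤ Δ) : eta δ g n ≤ M * δ :=
  eta_le_of_forall hδ fun _ hv0 hvδ =>
    (sum_le_mul_sum hgM hδΔ hv0 hvδ).trans (mul_le_mul_of_nonneg_left hvδ hM)

lemma eta_zero (hδ : 0 ≤ δ) : eta δ g 0 = 0 := by
  have h : feasibleRevenue g 0 δ = {0} := by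
    ext r
    simp [feasibleRevenue, hδ]
  rw [eta_eq_sSup_feasibleRevenue, h, csSup_singleton]

lemma eta_mono (hgM : ∀ t < n, ∀ x ∈ Icc 0 Δ, g t x ≤ M * x) {δ' : ℝ} (hδ : 0 ≤ δ)
    (hδδ' : δ ≤ δ') (hδ'Δ : δ' ≤ Δ) : eta δ g n ≤ eta δ' g n :=
  eta_le_of_forall hδ fun _ hv0 hvδ => le_eta hgM hδ'Δ hv0 (hvδ.trans hδδ')

lemma add_le_eta_succ (hgM : ∀ t < n + 1, ∀ x ∈ Icc 0 Δ, g t x ≤ M * x) {u : ℝ}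
    (hu : u ∈ Icc 0 δ) (hδΔ : δ ≤ Δ) : eta (δ - u) g n + g n u ≤ eta δ g (n + 1) := by
  suffices eta (δ - u) g n ≤ eta δ g (n + 1) - g n u by linarith
  refine eta_le_of_forall (sub_nonneg.2 hu.2) fun v hv0 hvδ => ?_
  have hupd : ∀ t ∈ range n, Function.update v n u t = v t := fun t ht =>
    Function.update_of_ne (mem_range.1 ht).ne _ _
  have h := le_eta hgM hδΔ (v := Function.update v n u)
    (fun t ht => by
      rcases (Nat.lt_succ_iff_lt_or_eq.1 ht) with ht | rfl
      · rw [Function.update_of_ne ht.ne]; exact hv0 t ht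
      · rw [Function.update_self]; exact hu.1)
    (by rw [sum_range_succ, Function.update_self, sum_congr rfl hupd]; linarith)
  rw [sum_range_succ, Function.update_self,
    sum_congr rfl fun t ht => congrArg (g t) (hupd t ht)] at h
  linarith

lemma eta_succ_le_of_forall (hgM : ∀ t < n, ∀ x ∈ Icc 0 Δ, g t x ≤ M * x) (hδ : 0 ≤ δ)
    (hδΔ : δ ≤ Δ) {C : ℝ} (h : ∀ u ∈ Icc 0 δ, eta (δ - u) g n + g n u ≤ C) :
    eta δ g (n + 1) ≤ C := by
  refine eta_le_of_forall hδ fun v hv0 hvδ => ?_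
  rw [sum_range_succ] at hvδ ⊢
  have hsum : 0 ≤ ∑ t ∈ range n, v t :=
    sum_nonneg fun t ht => hv0 t (Nat.lt_succ_of_lt (mem_range.1 ht))
  have hvn := hv0 n n.lt_succ_self
  have hle := le_eta hgM (δ := δ - v n) (by linarith) (fun t ht => hv0 t (Nat.lt_succ_of_lt ht))
    (by linarith)
  linarith [h (v n) ⟨hvn, by linarith⟩]

lemma eta_le_eta_succ (hgM : ∀ t < n + 1, ∀ x ∈ Icc 0 Δ, g t x ≤ M * x) (hg0 : g n 0 = 0)
    (hδ : 0 ≤ δ) (hδΔ : δ ≤ Δ) : eta δ g n ≤ eta δ g (n + 1) := by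
  simpa [hg0] using add_le_eta_succ hgM ⟨le_rfl, hδ⟩ hδΔ

lemma eta_succ_le_add_of_isMaxOn (hgM : ∀ t < n, ∀ x ∈ Icc 0 Δ, g t x ≤ M * x) (hΔ : 0 ≤ Δ)
    {vh : ℝ} (hmax : IsMaxOn (g n) (Icc 0 Δ) vh) : eta Δ g (n + 1) ≤ eta Δ g n + g n vh :=
  eta_succ_le_of_forall hgM hΔ le_rfl fun _ hu =>
    add_le_add (eta_mono hgM (sub_nonneg.2 hu.2) (sub_le_self _ hu.1) le_rfl) (hmax hu)

lemma concaveOn_eta (hgM : ∀ t < n, ∀ x ∈ Icc 0 Δ, g t x ≤ M * x)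
    (hconc : ∀ t < n, ConcaveOn ℝ (Icc 0 Δ) (g t)) :
    ConcaveOn ℝ (Icc 0 Δ) (fun δ => eta δ g n) := by
  refine ⟨convex_Icc 0 Δ, fun δ₁ hδ₁ δ₂ hδ₂ a b ha hb hab => ?_⟩
  have hδ := convex_Icc 0 Δ hδ₁ hδ₂ ha hb hab
  simp only [eta_eq_sSup_feasibleRevenue]
  rw [← Real.sSup_smul_of_nonneg ha, ← Real.sSup_smul_of_nonneg hb,
    ← csSup_add ((feasibleRevenue_nonempty hδ₁.1).smul_set)
      ((bddAbove_feasibleRevenue hgM hδ₁.2).smul_of_nonneg ha)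
      ((feasibleRevenue_nonempty hδ₂.1).smul_set)
      ((bddAbove_feasibleRevenue hgM hδ₂.2).smul_of_nonneg hb)]
  refine csSup_le (((feasibleRevenue_nonempty hδ₁.1).smul_set).add
    (feasibleRevenue_nonempty hδ₂.1).smul_set) ?_
  rintro _ ⟨_, ⟨_, ⟨v₁, hv₁0, hv₁δ, rfl⟩, rfl⟩, _, ⟨_, ⟨v₂, hv₂0, hv₂δ, rfl⟩, rfl⟩, rfl⟩
  refine le_trans ?_ (le_csSup (bddAbove_feasibleRevenue hgM hδ.2)
    ⟨fun t => a * v₁ t + b * v₂ t, fun t ht => ?_, ?_, rfl⟩)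
  · simp only [smul_eq_mul, mul_sum, ← sum_add_distrib]
    refine sum_le_sum fun t ht => ?_
    have ht := mem_range.1 ht
    exact (hconc t ht).2 (Icc_subset_Icc_right hδ₁.2 (mem_Icc_of_sum_le hv₁0 hv₁δ ht))
      (Icc_subset_Icc_right hδ₂.2 (mem_Icc_of_sum_le hv₂0 hv₂δ ht)) ha hb hab
  · exact add_nonneg (mul_nonneg ha (hv₁0 t ht)) (mul_nonneg hb (hv₂0 t ht))
  · rw [sum_add_distrib, ← mul_sum, ← mul_sum]
    exact add_le_add (mul_le_mul_of_nonneg_left hv₁δ ha) (mul_le_mul_of_nonneg_left hv₂δ hb)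

end OfflineOptimum

lemma intervalIntegrable_sub_mul_div_sq {a b : ℝ} (ha : 0 < a) (hab : a ≤ b) (A B : ℝ) :
    IntervalIntegrable (fun y => (A - B * y) / y ^ 2) MeasureTheory.volume a b :=
  ((continuousOn_const.sub (continuousOn_const.mul continuousOn_id)).div (continuousOn_pow 2)
    fun _ hy => pow_ne_zero 2 (ha.trans_le (uIcc_of_le hab ▸ hy).1).ne').intervalIntegrable

open intervalIntegral in
lemma integral_sub_mul_div_sq {a b : ℝ} (ha : 0 < a) (hab : a ≤ b) (A B : ℝ) :
    ∫ y in a..b, (A - B * y) / y ^ 2 = A / a - A / b - B * Real.log (b / a) := by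
  have hpos : ∀ y ∈ uIcc a b, 0 < y := fun y hy => ha.trans_le (uIcc_of_le hab ▸ hy).1
  have hderiv : ∀ y ∈ uIcc a b,
      HasDerivAt (fun y => -A * y⁻¹ - B * Real.log y) ((A - B * y) / y ^ 2) y := by
    intro y hy
    have hy := (hpos y hy).ne'
    refine (((hasDerivAt_inv hy).const_mul (-A)).sub
      ((Real.hasDerivAt_log hy).const_mul B)).congr_deriv ?_
    field_simp
  rw [integral_eq_sub_of_hasDerivAt hderiv, Real.log_div (hpos b right_mem_uIcc).ne' ha.ne']
  · ring
  exact intervalIntegrable_sub_mul_div_sq ha hab A B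

noncomputable def conjugateOn (Δ : ℝ) (F : ℝ → ℝ) (y : ℝ) : ℝ :=
  sSup ((fun δ => F δ - y * δ) '' Icc 0 Δ)

section Conjugate

variable {Δ : ℝ} {F G : ℝ → ℝ} {y : ℝ}

lemma bddAbove_sub_mul_image (hF : BddAbove (F '' Icc 0 Δ)) :
    BddAbove ((fun δ => F δ - y * δ) '' Icc 0 Δ) := by
  obtain ⟨C, hC⟩ := hF
  refine ⟨C + |y| * Δ, forall_mem_image.2 fun δ hδ => ?_⟩
  have h : -(y * δ) ≤ |y| * Δ := by
    refine (neg_le_abs _).trans ?_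
    rw [abs_mul, abs_of_nonneg hδ.1]
    exact mul_le_mul_of_nonneg_left hδ.2 (abs_nonneg y)
  linarith [hC (mem_image_of_mem F hδ)]

lemma sub_mul_le_conjugateOn (hF : BddAbove (F '' Icc 0 Δ)) {δ : ℝ} (hδ : δ ∈ Icc 0 Δ) :
    F δ - y * δ ≤ conjugateOn Δ F y :=
  le_csSup (bddAbove_sub_mul_image hF) (mem_image_of_mem _ hδ)

lemma conjugateOn_le (hΔ : 0 ≤ Δ) {C : ℝ} (h : ∀ δ ∈ Icc 0 Δ, F δ - y * δ ≤ C) :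
    conjugateOn Δ F y ≤ C :=
  csSup_le ((nonempty_Icc.2 hΔ).image _) (forall_mem_image.2 h)

lemma conjugateOn_le_add (hF : BddAbove (F '' Icc 0 Δ)) (hΔ : 0 ≤ Δ) {c : ℝ}
    (h : ∀ δ ∈ Icc 0 Δ, G δ ≤ F δ + c) : conjugateOn Δ G y ≤ conjugateOn Δ F y + c :=
  conjugateOn_le hΔ fun δ hδ => by linarith [h δ hδ, sub_mul_le_conjugateOn (y := y) hF hδ]

lemma lipschitzWith_conjugateOn (hF : BddAbove (F '' Icc 0 Δ)) (hΔ : 0 ≤ Δ) :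
    LipschitzWith (Real.toNNReal Δ) (conjugateOn Δ F) := by
  refine LipschitzWith.of_le_add_mul' Δ fun y z => conjugateOn_le hΔ fun δ hδ => ?_
  have h : (z - y) * δ ≤ Δ * dist y z := by
    rw [Real.dist_eq, abs_sub_comm, mul_comm Δ]
    exact (le_abs_self _).trans (by
      rw [abs_mul, abs_of_nonneg hδ.1]; exact mul_le_mul_of_nonneg_left hδ.2 (abs_nonneg _))
  linarith [sub_mul_le_conjugateOn (y := z) hF hδ]

lemma intervalIntegrable_conjugateOn_div_sq (hF : BddAbove (F '' Icc 0 Δ)) (hΔ : 0 ≤ Δ)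
    {a b : ℝ} (ha : 0 < a) (hab : a ≤ b) :
    IntervalIntegrable (fun y => conjugateOn Δ F y / y ^ 2) MeasureTheory.volume a b :=
  ((lipschitzWith_conjugateOn hF hΔ).continuous.continuousOn.div (continuousOn_pow 2)
    fun _ hy => pow_ne_zero 2 (ha.trans_le (uIcc_of_le hab ▸ hy).1).ne').intervalIntegrable

end Conjugate

noncomputable def potential (Δ m M : ℝ) (F : ℝ → ℝ) : ℝ :=
  F Δ / m - ∫ y in m..M, conjugateOn Δ F y / y ^ 2

section Potential

open intervalIntegral

variable {Δ m M : ℝ} {F G : ℝ → ℝ}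

lemma potential_eq_zero (hF : EqOn F 0 (Icc 0 Δ)) (hΔ : 0 ≤ Δ) (hm : 0 < m) (hmM : m ≤ M) :
    potential Δ m M F = 0 := by
  have hbdd : BddAbove (F '' Icc 0 Δ) := ⟨0, forall_mem_image.2 fun δ hδ => (hF hδ).le⟩
  have hconj : EqOn (fun y => conjugateOn Δ F y / y ^ 2) 0 (uIcc m M) := by
    intro y hy
    have hy0 : 0 ≤ y := hm.le.trans (uIcc_of_le hmM ▸ hy).1
    have h0 : (0 : ℝ) ∈ Icc 0 Δ := ⟨le_rfl, hΔ⟩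
    have : conjugateOn Δ F y = 0 := by
      refine le_antisymm (conjugateOn_le hΔ fun δ hδ => ?_) ?_
      · rw [hF hδ, Pi.zero_apply, zero_sub, neg_nonpos]
        exact mul_nonneg hy0 hδ.1
      · simpa [hF h0] using sub_mul_le_conjugateOn (y := y) hbdd h0
    simp [this]
  rw [potential, integral_congr hconj, hF ⟨hΔ, le_rfl⟩]
  simp

lemma potential_le (hF : BddAbove (F '' Icc 0 Δ)) (hΔ : 0 ≤ Δ) (hm : 0 < m) (hmM : m ≤ M)
    (hFΔ : F Δ ≤ M * Δ) : potential Δ m M F ≤ Δ * (Real.log (M / m) + 1) := by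
  have hM : 0 < M := hm.trans_le hmM
  have hint : ∫ y in m..M, (F Δ - Δ * y) / y ^ 2 ≤ ∫ y in m..M, conjugateOn Δ F y / y ^ 2 := by
    refine integral_mono_on hmM (intervalIntegrable_sub_mul_div_sq hm hmM _ _)
      (intervalIntegrable_conjugateOn_div_sq hF hΔ hm hmM) fun y _ => ?_
    refine div_le_div_of_nonneg_right ?_ (sq_nonneg y)
    linarith [sub_mul_le_conjugateOn (y := y) hF ⟨hΔ, le_rfl⟩]
  rw [integral_sub_mul_div_sq hm hmM] at hint
  have hFM : F Δ / M ≤ Δ := (div_le_iff₀ hM).2 (by linarith)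
  rw [potential]
  linarith

/-- Above `q` the conjugates of `F` and `G` agree, and below `q` that of `G` exceeds that of `F`
by at most `G Δ - F Δ`, which costs at most `(G Δ - F Δ) (1/m - 1/q)` in the integral. -/
lemma div_le_potential_sub (hF : BddAbove (F '' Icc 0 Δ)) (hG : BddAbove (G '' Icc 0 Δ))
    (hΔ : 0 ≤ Δ) (hm : 0 < m) {q : ℝ} (hq : q ∈ Icc m M)
    (hFG : ∀ δ ∈ Icc 0 Δ, F δ ≤ G δ) (hGF : ∀ δ ∈ Icc 0 Δ, G δ ≤ F δ + (G Δ - F Δ))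
    (hGq : ∀ y, q ≤ y → conjugateOn Δ G y ≤ conjugateOn Δ F y) :
    (G Δ - F Δ) / q ≤ potential Δ m M G - potential Δ m M F := by
  set E := G Δ - F Δ
  set D := fun y => conjugateOn Δ G y / y ^ 2 - conjugateOn Δ F y / y ^ 2
  have hq0 : 0 < q := hm.trans_le hq.1
  have hint {a b : ℝ} (ha : 0 < a) (hab : a ≤ b) : IntervalIntegrable D MeasureTheory.volume a b :=
    (intervalIntegrable_conjugateOn_div_sq hG hΔ ha hab).sub
      (intervalIntegrable_conjugateOn_div_sq hF hΔ ha hab)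
  have hlow : ∫ y in m..q, D y ≤ E / m - E / q := by
    have hE := integral_sub_mul_div_sq hm hq.1 E 0
    simp only [zero_mul, sub_zero] at hE
    rw [← hE]
    refine integral_mono_on hq.1 (hint hm hq.1)
      (by simpa using intervalIntegrable_sub_mul_div_sq hm hq.1 E 0) fun y _ => ?_
    simp only [D, div_sub_div_same]
    refine div_le_div_of_nonneg_right ?_ (sq_nonneg y)
    linarith [conjugateOn_le_add (y := y) hF hΔ hGF]
  have hhigh : ∫ y in q..M, D y = 0 := by
    refine (integral_congr fun y hy => ?_).trans integral_zero
    have hy := (uIcc_of_le hq.2 ▸ hy).1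
    have hFG' := conjugateOn_le_add (y := y) (c := 0) hG hΔ fun δ hδ => by simpa using hFG δ hδ
    simp only [D, le_antisymm (hGq y hy) (by simpa using hFG'), sub_self]
  have hsplit := integral_add_adjacent_intervals (hint hm hq.1) (hint hq0 hq.2)
  rw [integral_sub (intervalIntegrable_conjugateOn_div_sq hG hΔ hm (hq.1.trans hq.2))
    (intervalIntegrable_conjugateOn_div_sq hF hΔ hm (hq.1.trans hq.2))] at hsplit
  rw [hhigh] at hsplit
  rw [potential, potential]
  linarith [sub_div (G Δ) (F Δ) m]

end Potential

section PotentialOfEta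

open Finset

variable {Δ m M : ℝ} {g : ℕ → ℝ → ℝ} {n : ℕ}

lemma bddAbove_eta_image (hM : 0 ≤ M) (hgM : ∀ t < n, ∀ x ∈ Icc 0 Δ, g t x ≤ M * x) :
    BddAbove ((fun δ => eta δ g n) '' Icc 0 Δ) :=
  ⟨M * Δ, forall_mem_image.2 fun _ hδ =>
    (eta_le_mul hM hgM hδ.1 hδ.2).trans (mul_le_mul_of_nonneg_left hδ.2 hM)⟩

lemma eta_succ_le_eta_add (hgM : ∀ t < n + 1, ∀ x ∈ Icc 0 Δ, g t x ≤ M * x)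
    (hconc : ∀ t < n, ConcaveOn ℝ (Icc 0 Δ) (g t)) {δ : ℝ} (hδ : δ ∈ Icc 0 Δ) :
    eta δ g (n + 1) ≤ eta δ g n + (eta Δ g (n + 1) - eta Δ g n) := by
  have hgM' : ∀ t < n, ∀ x ∈ Icc 0 Δ, g t x ≤ M * x := fun t ht => hgM t (Nat.lt_succ_of_lt ht)
  refine eta_succ_le_of_forall hgM' hδ.1 hδ.2 fun u hu => ?_
  have hinc := (concaveOn_eta hgM' hconc).map_add_sub_map_le (x := δ - u) (y := Δ - u)
    ⟨sub_nonneg.2 hu.2, by linarith [hδ.2, hu.1]⟩ (by simpa using hδ.1.trans hδ.2)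
    (by linarith [hδ.2]) hu.1
  simp only [sub_add_cancel] at hinc
  linarith [add_le_eta_succ hgM ⟨hu.1, hu.2.trans hδ.2⟩ le_rfl]

lemma conjugateOn_eta_succ_le (hM : 0 ≤ M) (hgM : ∀ t < n + 1, ∀ x ∈ Icc 0 Δ, g t x ≤ M * x)
    (hΔ : 0 ≤ Δ) {q y : ℝ} (hgq : ∀ x ∈ Icc 0 Δ, g n x ≤ q * x) (hqy : q ≤ y) :
    conjugateOn Δ (fun δ => eta δ g (n + 1)) y ≤ conjugateOn Δ (fun δ => eta δ g n) y := by
  have hgM' : ∀ t < n, ∀ x ∈ Icc 0 Δ, g t x ≤ M * x := fun t ht => hgM t (Nat.lt_succ_of_lt ht)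
  refine conjugateOn_le hΔ fun δ hδ => ?_
  suffices eta δ g (n + 1) ≤ conjugateOn Δ (fun δ => eta δ g n) y + y * δ by linarith
  refine eta_succ_le_of_forall hgM' hδ.1 hδ.2 fun u hu => ?_
  have h₁ := sub_mul_le_conjugateOn (y := y) (bddAbove_eta_image hM hgM')
    ⟨sub_nonneg.2 hu.2, (sub_le_self _ hu.1).trans hδ.2⟩
  have h₂ := hgq u ⟨hu.1, hu.2.trans hδ.2⟩
  nlinarith [mul_le_mul_of_nonneg_right hqy hu.1]

lemma eta_succ_sub_div_le_potential_sub (hgM : ∀ t < n + 1, ∀ x ∈ Icc 0 Δ, g t x ≤ M * x)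
    (hg0 : g n 0 = 0) (hconc : ∀ t < n, ConcaveOn ℝ (Icc 0 Δ) (g t)) (hΔ : 0 ≤ Δ) (hm : 0 < m)
    {q : ℝ} (hq : q ∈ Icc m M) (hgq : ∀ x ∈ Icc 0 Δ, g n x ≤ q * x) :
    (eta Δ g (n + 1) - eta Δ g n) / q ≤
      potential Δ m M (fun δ => eta δ g (n + 1)) - potential Δ m M (fun δ => eta δ g n) := by
  have hM : 0 ≤ M := hm.le.trans (hq.1.trans hq.2)
  exact div_le_potential_sub
    (bddAbove_eta_image hM fun t ht => hgM t (Nat.lt_succ_of_lt ht)) (bddAbove_eta_image hM hgM)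
    hΔ hm hq (fun _ hδ => eta_le_eta_succ hgM hg0 hδ.1 hδ.2)
    (fun _ hδ => eta_succ_le_eta_add hgM hconc hδ)
    (fun _ hy => conjugateOn_eta_succ_le hM hgM hΔ hgq hy)

theorem sum_eta_succ_sub_div_le {p : ℕ → ℝ} {T : ℕ} (hΔ : 0 ≤ Δ) (hm : 0 < m) (hmM : m ≤ M)
    (hg0 : ∀ t < T, g t 0 = 0) (hgp : ∀ t < T, ∀ x ∈ Icc 0 Δ, g t x ≤ p t * x)
    (hp : ∀ t < T, p t ∈ Icc m M) (hconc : ∀ t < T, ConcaveOn ℝ (Icc 0 Δ) (g t)) :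
    ∑ t ∈ range T, (eta Δ g (t + 1) - eta Δ g t) / p t ≤ Δ * (Real.log (M / m) + 1) := by
  have hM : 0 ≤ M := hm.le.trans hmM
  have hgM : ∀ t < T, ∀ x ∈ Icc 0 Δ, g t x ≤ M * x := fun t ht x hx =>
    (hgp t ht x hx).trans (mul_le_mul_of_nonneg_right (hp t ht).2 hx.1)
  set Φ := fun n => potential Δ m M (fun δ => eta δ g n)
  calc ∑ t ∈ range T, (eta Δ g (t + 1) - eta Δ g t) / p t
      ≤ ∑ t ∈ range T, (Φ (t + 1) - Φ t) := sum_le_sum fun t ht => by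
        have ht := mem_range.1 ht
        exact eta_succ_sub_div_le_potential_sub (fun s hs => hgM s (by omega)) (hg0 t ht)
          (fun s hs => hconc s (by omega)) hΔ hm (hp t ht) (hgp t ht)
    _ = Φ T - Φ 0 := sum_range_sub Φ T
    _ ≤ Δ * (Real.log (M / m) + 1) := by
        rw [show Φ 0 = 0 from potential_eq_zero (fun δ hδ => eta_zero hδ.1) hΔ hm hmM, sub_zero]
        exact potential_le (bddAbove_eta_image hM hgM) hΔ hm hmM (eta_le_mul hM hgM hΔ le_rfl)

end PotentialOfEta

lemma crPursuit_le_eta_succ_sub {Δ M q π w vh : ℝ} {g : ℕ → ℝ → ℝ} {f : ℝ → ℝ} {n : ℕ}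
    (hgM : ∀ t < n, ∀ x ∈ Icc 0 Δ, g t x ≤ M * x) (hgn : g n = fun v => (q - f v) * v)
    (hf : ConvexOn ℝ (Icc 0 Δ) f) (hf0 : f 0 = 0) (hf_nonneg : ∀ v ∈ Icc 0 Δ, 0 ≤ f v)
    (hq : 0 < q) (hπ : 1 ≤ π) (hvh : vh ∈ Icc 0 Δ) (hmax : IsMaxOn (g n) (Icc 0 Δ) vh)
    (hw : w ∈ Icc 0 vh) (hpursuit : π * g n w = eta Δ g (n + 1) - eta Δ g n) :
    w ≤ 2 / (π * (1 + √(1 - 1 / π))) * ((eta Δ g (n + 1) - eta Δ g n) / q) := by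
  have hrev : π * g n w ≤ g n vh := by
    linarith [eta_succ_le_add_of_isMaxOn hgM (hvh.1.trans hvh.2) hmax]
  rw [← hpursuit, div_mul_div_comm, le_div_iff₀ (by positivity)]
  rw [hgn] at hrev hmax ⊢
  have key := one_add_sqrt_mul_le_two_mul_revenue hf hf0 hf_nonneg hq hπ hvh hmax hw hrev
  nlinarith

/-- Worst-case inventory bound for CR-Pursuit(π) in one-way trading with
convex price elasticity (Lemma 12 of the paper). -/
theorem stmt18 (Δ m M : ℝ) (hΔ : 0 < Δ) (hm : 0 < m) (hmM : m ≤ M)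
    (pi : ℝ) (hpi : 1 ≤ pi)
    (T : ℕ) (p : ℕ → ℝ) (f : ℕ → ℝ → ℝ) (g : ℕ → ℝ → ℝ)
    (hgdef : ∀ t < T, ∀ v, g t v = (p t - f t v) * v)
    (hp : ∀ t < T, p t ∈ Set.Icc m M)
    (hf : ∀ t < T, ConvexOn ℝ (Set.Icc 0 Δ) (f t) ∧ f t 0 = 0 ∧
      ∀ v ∈ Set.Icc (0:ℝ) Δ, 0 ≤ f t v)
    (vhat : ℕ → ℝ)
    (hvhat : ∀ t < T, vhat t ∈ Set.Icc 0 Δ ∧ IsMaxOn (g t) (Set.Icc 0 Δ) (vhat t))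
    (vb : ℕ → ℝ) (htraj : CRTraj Δ g T pi vb)
    (hvb : ∀ t < T, vb t ∈ Set.Icc 0 (vhat t)) :
    ∑ t ∈ Finset.range T, vb t ≤
      (2 * Δ / (pi * (1 + Real.sqrt (1 - 1 / pi)))) * (Real.log (M / m) + 1) := by
  have hg : ∀ t < T, g t = fun v => (p t - f t v) * v := fun t ht => funext (hgdef t ht)
  have hgp : ∀ t < T, ∀ x ∈ Icc 0 Δ, g t x ≤ p t * x := fun t ht x hx => by
    rw [hgdef t ht]
    nlinarith [(hf t ht).2.2 x hx, hx.1]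
  have hgM : ∀ t < T, ∀ x ∈ Icc 0 Δ, g t x ≤ M * x := fun t ht x hx =>
    (hgp t ht x hx).trans (mul_le_mul_of_nonneg_right (hp t ht).2 hx.1)
  have hsum := sum_eta_succ_sub_div_le hΔ.le hm hmM (fun t ht => by simp [hgdef t ht]) hgp hp
    fun t ht => hg t ht ▸ concaveOn_sub_mul_self (hf t ht).1 (hf t ht).2.1 (hf t ht).2.2 _
  calc ∑ t ∈ Finset.range T, vb t
      ≤ ∑ t ∈ Finset.range T,
          2 / (pi * (1 + √(1 - 1 / pi))) * ((eta Δ g (t + 1) - eta Δ g t) / p t) :=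
        Finset.sum_le_sum fun t ht => by
          have ht := Finset.mem_range.1 ht
          exact crPursuit_le_eta_succ_sub (fun s hs => hgM s (by omega)) (hg t ht) (hf t ht).1
            (hf t ht).2.1 (hf t ht).2.2 (hm.trans_le (hp t ht).1) hpi (hvhat t ht).1
            (hvhat t ht).2 (hvb t ht) (htraj t ht).2
    _ ≤ 2 / (pi * (1 + √(1 - 1 / pi))) * (Δ * (Real.log (M / m) + 1)) := by
        rw [← Finset.mul_sum]
        exact mul_le_mul_of_nonneg_left hsum (by positivity)
    _ = 2 * Δ / (pi * (1 + √(1 - 1 / pi))) * (Real.log (M / m) + 1) := by ring
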